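/- Let X and Y be Hausdorff topological spaces, let p : X → Y be a continuous, open, surjective map, and let ρ : X → ℝ be a continuous exhaustion, i.e., {x ∈ X : ρ(x) ≤ c} is compact for every c ∈ ℝ. Define ρ_Y : Y → ℝ by ρ_Y(y) = inf { ρ(x) : x ∈ p⁻¹(y) }. Then for every c ∈ ℝ one has the inclusion {y ∈ Y : ρ_Y(y) ≤ c} ⊆ p({x ∈ X : ρ(x) ≤ c}), and the sublevel set {y ∈ Y : ρ_Y(y) ≤ c} is compact. Hence ρ_Y is a continuous exhaustion of Y. -/

import Mathlib

/-!
Since `ρ` is an exhaustion, its infimum over each closed fibre `p ⁻¹' {y}` is attained. Hence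
`{y | ρY y ≤ c}` is exactly `p '' {x | ρ x ≤ c}`, the continuous image of a compact set.
-/

open Filter Set

section Exhaustion

variable {X α : Type*} [TopologicalSpace X] [LinearOrder α] {ρ : X → α}

theorem eventually_cocompact_le_of_isCompact_sublevel
    (hexh : ∀ c : α, IsCompact {x : X | ρ x ≤ c}) (x₀ : X) :
    ∀ᶠ x in cocompact X, ρ x₀ ≤ ρ x :=
  mem_of_superset (hexh (ρ x₀)).compl_mem_cocompact fun _ hx => (not_le.mp hx).le

variable [TopologicalSpace α] [ClosedIicTopology α]

theorem exists_isMinOn_of_isCompact_sublevel (hexh : ∀ c : α, IsCompact {x : X | ρ x ≤ c})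
    {s : Set X} (hρ : ContinuousOn ρ s) (hs : IsClosed s) (hne : s.Nonempty) :
    ∃ x ∈ s, IsMinOn ρ s x := by
  obtain ⟨x₀, hx₀⟩ := hne
  exact hρ.exists_isMinOn' hs hx₀
    (eventually_inf_principal.mpr ((eventually_cocompact_le_of_isCompact_sublevel hexh x₀).mono
      fun _ hx _ => hx))

end Exhaustion

section Pushdown

variable {X Y α : Type*} [TopologicalSpace X] [TopologicalSpace Y] [T1Space Y]
  [ConditionallyCompleteLinearOrder α] [TopologicalSpace α] [ClosedIicTopology α]
  {p : X → Y} {ρ : X → α}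

theorem exists_isLeast_image_fiber (hpc : Continuous p) (hps : Function.Surjective p)
    (hρ : Continuous ρ) (hexh : ∀ c : α, IsCompact {x : X | ρ x ≤ c}) (y : Y) :
    ∃ x, p x = y ∧ IsLeast (ρ '' (p ⁻¹' {y})) (ρ x) := by
  obtain ⟨x, rfl, hmin⟩ := exists_isMinOn_of_isCompact_sublevel hexh hρ.continuousOn
    (isClosed_singleton.preimage hpc) (hps y)
  exact ⟨x, rfl, mem_image_of_mem ρ rfl, forall_mem_image.2 hmin⟩

theorem setOf_sInf_image_fiber_le_eq_image (hpc : Continuous p) (hps : Function.Surjective p)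
    (hρ : Continuous ρ) (hexh : ∀ c : α, IsCompact {x : X | ρ x ≤ c}) (c : α) :
    {y | sInf (ρ '' (p ⁻¹' {y})) ≤ c} = p '' {x | ρ x ≤ c} := by
  ext y
  obtain ⟨x, rfl, hleast⟩ := exists_isLeast_image_fiber hpc hps hρ hexh y
  rw [mem_ofPred_eq, hleast.csInf_eq]
  constructor
  · exact fun hx => ⟨x, hx, rfl⟩
  · rintro ⟨x', hx', hpx'⟩
    exact (hleast.2 ⟨x', hpx', rfl⟩).trans hx'

end Pushdown

theorem pushdown_exhaustion_sublevel_compact_general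
    {X Y : Type*} [TopologicalSpace X] [TopologicalSpace Y] [T2Space Y]
    (p : X → Y) (hpc : Continuous p) (hps : Function.Surjective p)
    (ρ : X → ℝ) (hρc : Continuous ρ)
    (hexh : ∀ c : ℝ, IsCompact {x : X | ρ x ≤ c})
    (ρY : Y → ℝ) (hρY : ∀ y : Y, ρY y = sInf (ρ '' (p ⁻¹' {y}))) :
    ∀ c : ℝ, {y : Y | ρY y ≤ c} ⊆ p '' {x : X | ρ x ≤ c} ∧ IsCompact {y : Y | ρY y ≤ c} := by
  obtain rfl : ρY = fun y => sInf (ρ '' (p ⁻¹' {y})) := funext hρY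
  intro c
  rw [setOf_sInf_image_fiber_le_eq_image hpc hps hρc hexh c]
  exact ⟨subset_rfl, (hexh c).image hpc⟩

/-- Pushing down a continuous exhaustion along a continuous open surjection:
the sublevel sets of the pushed-down function are contained in the image of the
corresponding sublevel sets and are compact; hence the base inherits an exhaustion. -/
theorem pushdown_exhaustion_sublevel_compact
    {X Y : Type*} [TopologicalSpace X] [TopologicalSpace Y] [T2Space X] [T2Space Y]
    (p : X → Y) (hpc : Continuous p) (hpo : IsOpenMap p) (hps : Function.Surjective p)
    (ρ : X → ℝ) (hρc : Continuous ρ)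
    (hexh : ∀ c : ℝ, IsCompact {x : X | ρ x ≤ c})
    (ρY : Y → ℝ) (hρY : ∀ y : Y, ρY y = sInf (ρ '' (p ⁻¹' {y}))) :
    ∀ c : ℝ, {y : Y | ρY y ≤ c} ⊆ p '' {x : X | ρ x ≤ c} ∧ IsCompact {y : Y | ρY y ≤ c} :=
  pushdown_exhaustion_sublevel_compact_general p hpc hps ρ hρc hexh ρY hρY
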